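/- (Lemme 2, general norm criterion over ℚ_p for p ≡ 1 mod 4) Let p be a prime with p ≡ 1 (mod 4), let z ∈ ℚ_p be nonzero with normalized valuation n = v(z), and let u ∈ ℤ_p be the unit with z = pⁿ·u. Then there exist x, y ∈ ℚ_p with x² − p·y² = z if and only if the residue of u in ZMod p (via the reduction map ℤ_p → ZMod p) is a square in ZMod p. -/

import Mathlib

/-!
The elements `x² − p y²` form a multiplicative monoid containing every square, hence closed
under inverses in `ℚ_p`. As `p ≡ 1 (mod 4)`, `-1 = i²` is a square in `ℤ_p` by Hensel's lemma,
so `p = 0² − p i²` lies in this monoid and `z = pⁿ u` is of the form `x² − p y²` iff `u` is.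
If `u = x² − p y²`, the valuations of `x²` and `p y²` have different parities, so
`1 = ‖u‖ = max ‖x²‖ ‖p y²‖`; hence `x, y ∈ ℤ_p` and `ū = x̄²` in `ZMod p`. Conversely, as `p` is
odd, Hensel's lemma lifts a square root of `ū` to a square root of `u` in `ℤ_p`.
-/

open Polynomial

universe u

section Norms

variable {R : Type*} [CommRing R]

def normsSqrt (d : R) : Submonoid R where
  carrier := {z | ∃ x y : R, x ^ 2 - d * y ^ 2 = z}
  one_mem' := ⟨1, 0, by ring⟩
  mul_mem' := by
    rintro _ _ ⟨x₁, y₁, rfl⟩ ⟨x₂, y₂, rfl⟩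
    exact ⟨x₁ * x₂ + d * y₁ * y₂, x₁ * y₂ + y₁ * x₂, by ring⟩

theorem mem_normsSqrt {d z : R} : z ∈ normsSqrt d ↔ ∃ x y : R, x ^ 2 - d * y ^ 2 = z :=
  Iff.rfl

theorem sq_mem_normsSqrt (d x : R) : x ^ 2 ∈ normsSqrt d :=
  ⟨x, 0, by ring⟩

theorem self_mem_normsSqrt {d : R} (h : IsSquare (-1 : R)) : d ∈ normsSqrt d := by
  obtain ⟨i, hi⟩ := h
  exact ⟨0, i, by linear_combination d * hi⟩

variable {K : Type*} [Field K] {d : K}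

theorem inv_mem_normsSqrt {a : K} (ha : a ∈ normsSqrt d) : a⁻¹ ∈ normsSqrt d := by
  have inv_eq : a⁻¹ = a * a⁻¹ ^ 2 := by
    rcases eq_or_ne a 0 with rfl | ha0
    · simp
    · field_simp
  rw [inv_eq]
  exact mul_mem ha (sq_mem_normsSqrt d _)

theorem zpow_mem_normsSqrt {a : K} (ha : a ∈ normsSqrt d) (n : ℤ) : a ^ n ∈ normsSqrt d := by
  obtain ⟨k, rfl | rfl⟩ := Int.eq_nat_or_neg n
  · rw [zpow_natCast]
    exact pow_mem ha k
  · rw [zpow_neg, zpow_natCast]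
    exact inv_mem_normsSqrt (pow_mem ha k)

theorem mul_mem_normsSqrt_iff {a b : K} (ha : a ∈ normsSqrt d) (ha0 : a ≠ 0) :
    a * b ∈ normsSqrt d ↔ b ∈ normsSqrt d := by
  refine ⟨fun hab => ?_, mul_mem ha⟩
  rw [← inv_mul_cancel_left₀ ha0 b]
  exact mul_mem (inv_mem_normsSqrt ha) hab

end Norms

theorem HenselianLocalRing.isSquare_of_isSquare_map {R K : Type u} [CommRing R]
    [HenselianLocalRing R] [Field K] (φ : R →+* K) (hφ : Function.Surjective φ)
    (h2 : (2 : K) ≠ 0) {a : R} (ha : φ a ≠ 0) (h : IsSquare (φ a)) : IsSquare a := by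
  obtain ⟨b, hb⟩ := h
  have hb0 : b ≠ 0 := by rintro rfl; exact ha (by simpa using hb)
  have lift_root := ((HenselianLocalRing.TFAE R).out 0 2).mp ‹_›
  obtain ⟨s, hs, -⟩ := lift_root φ hφ (X ^ 2 - C a) (monic_X_pow_sub_C a two_ne_zero) b
    (by simp [hb, sq]) (by simp [hb0, one_add_one_eq_two, map_ofNat φ 2, h2])
  exact ⟨s, by simpa [sq, sub_eq_zero, eq_comm] using hs⟩

namespace Padic

variable {p : ℕ} [Fact p.Prime]

theorem norm_sq_ne_norm_p_mul_sq {x y : ℚ_[p]} (hx : x ≠ 0) (hy : y ≠ 0) :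
    ‖x ^ 2‖ ≠ ‖(p : ℚ_[p]) * y ^ 2‖ := by
  have hp0 : (p : ℚ_[p]) ≠ 0 := NeZero.ne _
  have hp1 : (1 : ℝ) < p := by exact_mod_cast (Fact.out : p.Prime).one_lt
  rw [norm_eq_zpow_neg_valuation (pow_ne_zero 2 hx),
    norm_eq_zpow_neg_valuation (mul_ne_zero hp0 (pow_ne_zero 2 hy)),
    valuation_mul hp0 (pow_ne_zero 2 hy), valuation_p, valuation_pow, valuation_pow,
    Ne, zpow_right_inj₀ (by linarith) hp1.ne']
  omega

theorem norm_sq_sub_p_mul_sq (x y : ℚ_[p]) :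
    ‖x ^ 2 - p * y ^ 2‖ = max ‖x ^ 2‖ ‖(p : ℚ_[p]) * y ^ 2‖ := by
  rcases eq_or_ne x 0 with rfl | hx
  · rw [zero_pow two_ne_zero, zero_sub, norm_neg, norm_zero, max_eq_right (norm_nonneg _)]
  rcases eq_or_ne y 0 with rfl | hy
  · simp
  have hne := norm_sq_ne_norm_p_mul_sq hx hy
  rw [← norm_neg (_ * _)] at hne
  rw [sub_eq_add_neg, add_eq_max_of_ne hne, norm_neg]

theorem norm_le_one_of_norm_sq_sub_p_mul_sq_le_one {x y : ℚ_[p]}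
    (h : ‖x ^ 2 - p * y ^ 2‖ ≤ 1) : ‖x‖ ≤ 1 ∧ ‖y‖ ≤ 1 := by
  rw [norm_sq_sub_p_mul_sq, max_le_iff] at h
  obtain ⟨hx1, hy1⟩ := h
  refine ⟨(pow_le_one_iff_of_nonneg (norm_nonneg x) two_ne_zero).mp (by rwa [← norm_pow]), ?_⟩
  rcases eq_or_ne y 0 with rfl | hy
  · simp
  have hp0 : (p : ℚ_[p]) ≠ 0 := NeZero.ne _
  rw [norm_le_one_iff_val_nonneg, valuation_mul hp0 (pow_ne_zero 2 hy), valuation_p,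
    valuation_pow] at hy1
  rw [norm_le_one_iff_val_nonneg]
  omega

end Padic

namespace PadicInt

variable {p : ℕ} [Fact p.Prime]

instance : HenselianLocalRing ℤ_[p] where
  is_henselian f hf a₀ h₁ h₂ := HenselianRing.is_henselian f hf a₀ h₁ (h₂.map _)

theorem isSquare_of_isSquare_toZMod (hp : p ≠ 2) {a : ℤ_[p]} (ha : IsUnit a)
    (h : IsSquare (toZMod a)) : IsSquare a :=
  HenselianLocalRing.isSquare_of_isSquare_map toZMod (ZMod.ringHom_surjective toZMod)
    (Ring.two_ne_zero (by rwa [ZMod.ringChar_zmod_n])) (ha.map toZMod).ne_zero h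

theorem isSquare_neg_one (hp : p % 4 = 1) : IsSquare (-1 : ℤ_[p]) :=
  isSquare_of_isSquare_toZMod (by omega) isUnit_one.neg
    (by simpa using ZMod.exists_sq_eq_neg_one_iff.mpr (by omega))

theorem isSquare_toZMod_of_mem_normsSqrt {a : ℤ_[p]} (h : (a : ℚ_[p]) ∈ normsSqrt (p : ℚ_[p])) :
    IsSquare (toZMod a) := by
  obtain ⟨x, y, hxy⟩ := h
  obtain ⟨hx, hy⟩ :=
    Padic.norm_le_one_of_norm_sq_sub_p_mul_sq_le_one (by rw [hxy]; exact a.norm_le_one)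
  obtain ⟨x, rfl⟩ : ∃ x' : ℤ_[p], (x' : ℚ_[p]) = x := ⟨⟨x, hx⟩, rfl⟩
  obtain ⟨y, rfl⟩ : ∃ y' : ℤ_[p], (y' : ℚ_[p]) = y := ⟨⟨y, hy⟩, rfl⟩
  have ha : a = x ^ 2 - p * y ^ 2 := PadicInt.ext (by push_cast; exact hxy.symm)
  exact ⟨toZMod x, by simp [ha, sq]⟩

end PadicInt

theorem norm_criterion_Qp_one_mod_four_general (p : ℕ) [Fact p.Prime] (hp : p % 4 = 1)
    (z : ℚ_[p]) (u : ℤ_[p]) (hu : IsUnit u)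
    (hzu : z = (p : ℚ_[p]) ^ z.valuation * u) :
    (∃ x y : ℚ_[p], x ^ 2 - p * y ^ 2 = z) ↔ IsSquare (PadicInt.toZMod u) := by
  have hp0 : (p : ℚ_[p]) ≠ 0 := NeZero.ne _
  have hneg_one : IsSquare (-1 : ℚ_[p]) := by
    simpa using (PadicInt.isSquare_neg_one hp).map PadicInt.Coe.ringHom
  have hpow : (p : ℚ_[p]) ^ z.valuation ∈ normsSqrt (p : ℚ_[p]) :=
    zpow_mem_normsSqrt (self_mem_normsSqrt hneg_one) _
  rw [← mem_normsSqrt, hzu, mul_mem_normsSqrt_iff hpow (zpow_ne_zero _ hp0)]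
  refine ⟨PadicInt.isSquare_toZMod_of_mem_normsSqrt, fun h => ?_⟩
  obtain ⟨s, rfl⟩ := PadicInt.isSquare_of_isSquare_toZMod (by omega) hu h
  exact ⟨s, 0, by push_cast; ring⟩

/-- (Lemme 2, general norm criterion over `ℚ_p` for `p ≡ 1 (mod 4)`) Write a nonzero
`z ∈ ℚ_p` as `z = p^{v(z)}·u` with `u` a unit of `ℤ_p`. Then `z` is of the form
`x² − p·y²` if and only if the residue of `u` in `ZMod p` is a square. -/
theorem norm_criterion_Qp_one_mod_four (p : ℕ) [Fact p.Prime] (hp : p % 4 = 1)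
    (z : ℚ_[p]) (hz : z ≠ 0) (u : ℤ_[p]) (hu : IsUnit u)
    (hzu : z = (p : ℚ_[p]) ^ z.valuation * u) :
    (∃ x y : ℚ_[p], x ^ 2 - p * y ^ 2 = z) ↔ IsSquare (PadicInt.toZMod u) :=
  norm_criterion_Qp_one_mod_four_general p hp z u hu hzu
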